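/- For any sequent S and interpretation I, if S is a theorem of the extended infinitary system, then S^I is a theorem of the classical extended system, obtained by replacing the axiom schema F ∨ (F→G) ∨ ¬G with the law of the excluded middle F ∨ ¬F. -/

import Mathlib

open Classical

/-- Infinitary propositional formulas over a signature `σ`: atoms, set-indexed
conjunctions and disjunctions (represented by families indexed by a type,
which corresponds exactly to *bounded* sets of formulas in the hierarchy),
and implication. -/
inductive IForm (σ : Type) : Type 1
  | atom : σ → IForm σ
  | conj : (ι : Type) → (ι → IForm σ) → IForm σ
  | disj : (ι : Type) → (ι → IForm σ) → IForm σ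
  | impl : IForm σ → IForm σ → IForm σ

namespace IForm

variable {σ : Type}

/-- `⊥` is the empty disjunction. -/
def bot : IForm σ := disj Empty Empty.elim

/-- `¬F` abbreviates `F → ⊥`. -/
def neg (F : IForm σ) : IForm σ := impl F bot

/-- Binary conjunction `F ∧ G` as `{F, G}^∧`. -/
def and2 (F G : IForm σ) : IForm σ := conj Bool (fun b => cond b F G)

/-- Binary disjunction `F ∨ G` as `{F, G}^∨`. -/
def or2 (F G : IForm σ) : IForm σ := disj Bool (fun b => cond b F G)

/-- Ternary disjunction. -/
def or3 (F G H : IForm σ) : IForm σ := disj (Fin 3) (fun i => [F, G, H].get i)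

/-- `F ↔ G` abbreviates `(F → G) ∧ (G → F)`. -/
def biimp (F G : IForm σ) : IForm σ := and2 (impl F G) (impl G F)

/-- Satisfaction of an infinitary formula by an interpretation `I ⊆ σ`. -/
def sat (I : Set σ) : IForm σ → Prop
  | atom p => p ∈ I
  | conj _ f => ∀ i, sat I (f i)
  | disj _ f => ∃ i, sat I (f i)
  | impl F G => sat I F → sat I G

/-- The reduct `F^I` of a formula w.r.t. an interpretation `I`. -/
noncomputable def reduct (I : Set σ) : IForm σ → IForm σ
  | atom p => if p ∈ I then atom p else bot
  | conj ι f => conj ι (fun i => reduct I (f i))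
  | disj ι f => disj ι (fun i => reduct I (f i))
  | impl F G => if sat I (impl F G) then impl (reduct I F) (reduct I G) else bot

/-- `I` satisfies a set of formulas if it satisfies all its elements. -/
def satSet (I : Set σ) (H : Set (IForm σ)) : Prop := ∀ F ∈ H, sat I F

/-- `I` is a stable model of a set `H` of formulas if it is minimal w.r.t.
set inclusion among the interpretations satisfying the reduct `H^I`. -/
def StableModel (I : Set σ) (H : Set (IForm σ)) : Prop :=
  satSet I (reduct I '' H) ∧ ∀ J : Set σ, satSet J (reduct I '' H) → J ⊆ I → J = I

noncomputable instance : DecidableEq (IForm σ) := Classical.decEq _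

/-- The basic infinitary system of natural deduction: sequents `Γ ⇒ F` where
`Γ` is a finite set of infinitary formulas.  Axiom `F ⇒ F`; introduction and
elimination rules for set-indexed conjunction and disjunction and for
implication; weakening. -/
inductive Deriv : Finset (IForm σ) → IForm σ → Prop
  | ax (F : IForm σ) : Deriv {F} F
  | conjI (Γ : Finset (IForm σ)) (ι : Type) (f : ι → IForm σ) :
      (∀ i, Deriv Γ (f i)) → Deriv Γ (conj ι f)
  | conjE (Γ : Finset (IForm σ)) (ι : Type) (f : ι → IForm σ) (i : ι) :
      Deriv Γ (conj ι f) → Deriv Γ (f i)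
  | disjI (Γ : Finset (IForm σ)) (ι : Type) (f : ι → IForm σ) (i : ι) :
      Deriv Γ (f i) → Deriv Γ (disj ι f)
  | disjE (Γ Δ : Finset (IForm σ)) (ι : Type) (f : ι → IForm σ) (F : IForm σ) :
      Deriv Γ (disj ι f) → (∀ i, Deriv (insert (f i) Δ) F) → Deriv (Γ ∪ Δ) F
  | implI (Γ : Finset (IForm σ)) (F G : IForm σ) :
      Deriv (insert F Γ) G → Deriv Γ (impl F G)
  | implE (Γ Δ : Finset (IForm σ)) (F G : IForm σ) :
      Deriv Γ F → Deriv Δ (impl F G) → Deriv (Γ ∪ Δ) G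
  | weak (Γ Δ : Finset (IForm σ)) (F : IForm σ) :
      Deriv Γ F → Deriv (Γ ∪ Δ) F

end IForm
namespace IForm

variable {σ : Type}

/-- The extended system: the basic system plus the axiom schemas
`F ∨ (F → G) ∨ ¬G` (Hosoi), the converse infinitary De Morgan law
`¬⋀ F → ⋁ ¬F`, and the two converse infinitary distributivity laws
(for non-empty families). -/
inductive DerivE : Finset (IForm σ) → IForm σ → Prop
  | ax (F : IForm σ) : DerivE {F} F
  | conjI (Γ : Finset (IForm σ)) (ι : Type) (f : ι → IForm σ) :
      (∀ i, DerivE Γ (f i)) → DerivE Γ (conj ι f)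
  | conjE (Γ : Finset (IForm σ)) (ι : Type) (f : ι → IForm σ) (i : ι) :
      DerivE Γ (conj ι f) → DerivE Γ (f i)
  | disjI (Γ : Finset (IForm σ)) (ι : Type) (f : ι → IForm σ) (i : ι) :
      DerivE Γ (f i) → DerivE Γ (disj ι f)
  | disjE (Γ Δ : Finset (IForm σ)) (ι : Type) (f : ι → IForm σ) (F : IForm σ) :
      DerivE Γ (disj ι f) → (∀ i, DerivE (insert (f i) Δ) F) → DerivE (Γ ∪ Δ) F
  | implI (Γ : Finset (IForm σ)) (F G : IForm σ) :
      DerivE (insert F Γ) G → DerivE Γ (impl F G)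
  | implE (Γ Δ : Finset (IForm σ)) (F G : IForm σ) :
      DerivE Γ F → DerivE Δ (impl F G) → DerivE (Γ ∪ Δ) G
  | weak (Γ Δ : Finset (IForm σ)) (F : IForm σ) :
      DerivE Γ F → DerivE (Γ ∪ Δ) F
  | hosoi (F G : IForm σ) : DerivE ∅ (or3 F (impl F G) (neg G))
  | demConv (ι : Type) (f : ι → IForm σ) :
      DerivE ∅ (impl (neg (conj ι f)) (disj ι fun i => neg (f i)))
  | distConv1 (ι : Type) [Nonempty ι] (κ : ι → Type) (g : (i : ι) → κ i → IForm σ) :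
      DerivE ∅ (impl (conj ι fun i => disj (κ i) (g i))
                     (disj ((i : ι) → κ i) fun c => conj ι fun i => g i (c i)))
  | distConv2 (ι : Type) [Nonempty ι] (κ : ι → Type) (g : (i : ι) → κ i → IForm σ) :
      DerivE ∅ (impl (conj ((i : ι) → κ i) fun c => disj ι fun i => g i (c i))
                     (disj ι fun i => conj (κ i) (g i)))

/-- The classical extended system: like the extended system, but with the
Hosoi axiom schema replaced by the law of the excluded middle `F ∨ ¬F`. -/
inductive DerivC : Finset (IForm σ) → IForm σ → Prop
  | ax (F : IForm σ) : DerivC {F} F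
  | conjI (Γ : Finset (IForm σ)) (ι : Type) (f : ι → IForm σ) :
      (∀ i, DerivC Γ (f i)) → DerivC Γ (conj ι f)
  | conjE (Γ : Finset (IForm σ)) (ι : Type) (f : ι → IForm σ) (i : ι) :
      DerivC Γ (conj ι f) → DerivC Γ (f i)
  | disjI (Γ : Finset (IForm σ)) (ι : Type) (f : ι → IForm σ) (i : ι) :
      DerivC Γ (f i) → DerivC Γ (disj ι f)
  | disjE (Γ Δ : Finset (IForm σ)) (ι : Type) (f : ι → IForm σ) (F : IForm σ) :
      DerivC Γ (disj ι f) → (∀ i, DerivC (insert (f i) Δ) F) → DerivC (Γ ∪ Δ) F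
  | implI (Γ : Finset (IForm σ)) (F G : IForm σ) :
      DerivC (insert F Γ) G → DerivC Γ (impl F G)
  | implE (Γ Δ : Finset (IForm σ)) (F G : IForm σ) :
      DerivC Γ F → DerivC Δ (impl F G) → DerivC (Γ ∪ Δ) G
  | weak (Γ Δ : Finset (IForm σ)) (F : IForm σ) :
      DerivC Γ F → DerivC (Γ ∪ Δ) F
  | lem (F : IForm σ) : DerivC ∅ (or2 F (neg F))
  | demConv (ι : Type) (f : ι → IForm σ) :
      DerivC ∅ (impl (neg (conj ι f)) (disj ι fun i => neg (f i)))
  | distConv1 (ι : Type) [Nonempty ι] (κ : ι → Type) (g : (i : ι) → κ i → IForm σ) :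
      DerivC ∅ (impl (conj ι fun i => disj (κ i) (g i))
                     (disj ((i : ι) → κ i) fun c => conj ι fun i => g i (c i)))
  | distConv2 (ι : Type) [Nonempty ι] (κ : ι → Type) (g : (i : ι) → κ i → IForm σ) :
      DerivC ∅ (impl (conj ((i : ι) → κ i) fun c => disj ι fun i => g i (c i))
                     (disj ι fun i => conj (κ i) (g i)))

end IForm

/-!
Induction on the derivation. The extended system is sound for satisfaction by `I`, and the
reduct of a formula false in `I` is classically refutable. Hence wherever a reduct degenerates,
i.e. `(F → G)^I = ⊥` although `F → G` is derived or used, some premise is false in `I` and the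
reduced context is inconsistent. Every axiom is satisfied by `I`, so the reducts of the De Morgan
and distributivity axioms are instances of the same schemas. The reduct of Hosoi's axiom has the
disjuncts `F^I` and `F^I → G^I` when `I ⊨ G`, one of which follows from `F^I ∨ ¬F^I`, and the
disjunct `¬G^I` when `I ⊭ G`.
-/

namespace IForm

variable {σ : Type} (I : Set σ)

lemma not_sat_bot : ¬ sat I (bot : IForm σ) := fun ⟨i, _⟩ => i.elim

lemma reduct_bot : reduct I (bot : IForm σ) = bot := by
  show disj Empty (fun i => reduct I (Empty.elim i)) = disj Empty Empty.elim
  congr 1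
  funext i
  exact i.elim

lemma sat_hosoi (F G : IForm σ) : sat I (or3 F (impl F G) (neg G)) := by
  by_cases hG : sat I G
  · exact ⟨1, fun _ => hG⟩
  · exact ⟨2, fun h => absurd h hG⟩

lemma sat_demConv (ι : Type) (f : ι → IForm σ) :
    sat I (impl (neg (conj ι f)) (disj ι fun i => neg (f i))) := by
  intro hn
  by_cases hf : ∀ i, sat I (f i)
  · exact absurd (hn hf) (not_sat_bot I)
  · obtain ⟨i, hi⟩ := not_forall.mp hf
    exact ⟨i, fun h => absurd h hi⟩

lemma sat_distConv1 (ι : Type) (κ : ι → Type) (g : (i : ι) → κ i → IForm σ) :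
    sat I (impl (conj ι fun i => disj (κ i) (g i))
      (disj ((i : ι) → κ i) fun c => conj ι fun i => g i (c i))) :=
  fun h => ⟨fun i => (h i).choose, fun i => (h i).choose_spec⟩

lemma sat_distConv2 (ι : Type) (κ : ι → Type) (g : (i : ι) → κ i → IForm σ) :
    sat I (impl (conj ((i : ι) → κ i) fun c => disj ι fun i => g i (c i))
      (disj ι fun i => conj (κ i) (g i))) := by
  intro h
  by_contra hg
  choose c hc using fun i => not_forall.mp fun hi => hg ⟨i, hi⟩
  obtain ⟨i, hi⟩ := h c
  exact hc i hi

variable {I}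

lemma reduct_impl_of_sat {F G : IForm σ} (h : sat I (impl F G)) :
    reduct I (impl F G) = impl (reduct I F) (reduct I G) :=
  if_pos h

lemma reduct_impl_of_not_sat {F G : IForm σ} (h : ¬ sat I (impl F G)) :
    reduct I (impl F G) = bot :=
  if_neg h

lemma reduct_neg_of_not_sat {F : IForm σ} (h : ¬ sat I F) :
    reduct I (neg F) = neg (reduct I F) := by
  rw [neg, reduct_impl_of_sat fun hF => absurd hF h, reduct_bot, neg]

theorem DerivE.sound {Γ : Finset (IForm σ)} {F : IForm σ} (hd : DerivE Γ F)
    (hΓ : ∀ G ∈ Γ, sat I G) : sat I F := by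
  induction hd with
  | ax F => exact hΓ F (Finset.mem_singleton_self F)
  | conjI _ _ _ _ ih => exact fun i => ih i hΓ
  | conjE _ _ _ i _ ih => exact ih hΓ i
  | disjI _ _ _ i _ ih => exact ⟨i, ih hΓ⟩
  | disjE _ _ _ _ _ _ _ ih₁ ih₂ =>
    rw [Finset.forall_mem_union] at hΓ
    obtain ⟨i, hi⟩ := ih₁ hΓ.1
    exact ih₂ i ((Finset.forall_mem_insert _ _ _).mpr ⟨hi, hΓ.2⟩)
  | implI _ _ _ _ ih => exact fun hF => ih ((Finset.forall_mem_insert _ _ _).mpr ⟨hF, hΓ⟩)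
  | implE _ _ _ _ _ _ ih₁ ih₂ =>
    rw [Finset.forall_mem_union] at hΓ
    exact ih₂ hΓ.2 (ih₁ hΓ.1)
  | weak _ _ _ _ ih => exact ih (Finset.forall_mem_union.mp hΓ).1
  | hosoi => exact sat_hosoi I _ _
  | demConv => exact sat_demConv I _ _
  | distConv1 => exact sat_distConv1 I _ _ _
  | distConv2 => exact sat_distConv2 I _ _ _

theorem DerivE.exists_mem_not_sat {Γ : Finset (IForm σ)} {F : IForm σ} (hd : DerivE Γ F)
    (hF : ¬ sat I F) : ∃ G ∈ Γ, ¬ sat I G := by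
  by_contra! hΓ
  exact hF (hd.sound hΓ)

namespace DerivC

variable {Γ Δ : Finset (IForm σ)} {A B : IForm σ}

theorem mono (h : DerivC Γ A) (hsub : Γ ⊆ Δ) : DerivC Δ A := by
  simpa [Finset.union_eq_right.mpr hsub] using weak Γ Δ A h

theorem botE (h : DerivC Γ bot) : DerivC Γ A := by
  simpa using disjE Γ Γ Empty Empty.elim A h Empty.rec

theorem cut (h₁ : DerivC Γ A) (h₂ : DerivC {A} B) : DerivC Γ B := by
  simpa using implE Γ ∅ A B h₁ (implI ∅ A B (by simpa using h₂))

theorem em_cases (hpos : DerivC {A} B) (hneg : DerivC {neg A} B) : DerivC ∅ B := by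
  simpa using disjE ∅ ∅ Bool _ B (lem A) (Bool.rec (by simpa using hneg) (by simpa using hpos))

theorem reduct_refute : ∀ {F : IForm σ}, ¬ sat I F → DerivC {reduct I F} bot
  | atom p, hp => by
    rw [reduct, if_neg (show p ∉ I from hp)]
    exact ax bot
  | conj ι f, hf => by
    obtain ⟨i, hi⟩ := not_forall.mp hf
    exact cut (conjE _ ι _ i (ax _)) (reduct_refute hi)
  | disj ι f, hf => by
    simpa using disjE _ ∅ ι _ bot (ax (reduct I (disj ι f)))
      fun i => by simpa using reduct_refute fun hi => hf ⟨i, hi⟩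
  | impl F G, hFG => by
    rw [reduct_impl_of_not_sat hFG]
    exact ax bot

theorem neg_reduct_of_not_sat {F : IForm σ} (hF : ¬ sat I F) : DerivC ∅ (reduct I (neg F)) := by
  rw [reduct_neg_of_not_sat hF]
  exact implI ∅ _ _ (by simpa using reduct_refute hF)

theorem image_reduct_of_not_sat_mem {G : IForm σ} (hG : G ∈ Γ) (hns : ¬ sat I G) (B : IForm σ) :
    DerivC (Γ.image (reduct I)) B :=
  botE (mono (reduct_refute hns) (Finset.singleton_subset_iff.mpr (Finset.mem_image_of_mem _ hG)))

theorem reduct_implI {F G : IForm σ} (hd : DerivE (insert F Γ) G)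
    (ih : DerivC ((insert F Γ).image (reduct I)) (reduct I G)) :
    DerivC (Γ.image (reduct I)) (reduct I (impl F G)) := by
  by_cases hFG : sat I (impl F G)
  · rw [reduct_impl_of_sat hFG]
    exact implI _ _ _ (by rwa [← Finset.image_insert])
  · have hF : sat I F := by_contra fun hF => hFG fun h => absurd h hF
    obtain ⟨H, hH, hns⟩ := hd.exists_mem_not_sat fun hG => hFG fun _ => hG
    obtain rfl | hH := Finset.mem_insert.mp hH
    · exact absurd hF hns
    · exact image_reduct_of_not_sat_mem hH hns _

theorem reduct_implE {F G : IForm σ} (hd : DerivE Δ (impl F G))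
    (ih₁ : DerivC (Γ.image (reduct I)) (reduct I F))
    (ih₂ : DerivC (Δ.image (reduct I)) (reduct I (impl F G))) :
    DerivC ((Γ ∪ Δ).image (reduct I)) (reduct I G) := by
  by_cases hFG : sat I (impl F G)
  · rw [reduct_impl_of_sat hFG] at ih₂
    rw [Finset.image_union]
    exact implE _ _ _ _ ih₁ ih₂
  · obtain ⟨H, hH, hns⟩ := hd.exists_mem_not_sat hFG
    exact image_reduct_of_not_sat_mem (Finset.mem_union_right _ hH) hns _

variable (I)

theorem reduct_hosoi (F G : IForm σ) : DerivC ∅ (reduct I (or3 F (impl F G) (neg G))) := by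
  show DerivC ∅ (disj (Fin 3) fun i => reduct I ([F, impl F G, neg G].get i))
  by_cases hG : sat I G
  · refine em_cases (A := reduct I F) (disjI _ _ _ 0 (ax _)) (disjI _ _ _ 1 ?_)
    show DerivC _ (reduct I (impl F G))
    rw [reduct_impl_of_sat fun _ => hG]
    refine implI _ _ _ (botE ?_)
    simpa [← Finset.insert_eq] using implE _ _ _ _ (ax (reduct I F)) (ax (neg (reduct I F)))
  · exact disjI _ _ _ 2 (neg_reduct_of_not_sat hG)

theorem reduct_demConv (ι : Type) (f : ι → IForm σ) :
    DerivC ∅ (reduct I (impl (neg (conj ι f)) (disj ι fun i => neg (f i)))) := by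
  rw [reduct_impl_of_sat (sat_demConv I ι f)]
  by_cases hf : ∀ i, sat I (f i)
  · rw [neg, reduct_impl_of_not_sat fun h => not_sat_bot I (h (show sat I (conj ι f) from hf))]
    exact implI _ _ _ (botE (by simpa using ax bot))
  · obtain ⟨i, hi⟩ := not_forall.mp hf
    exact implI _ _ _ (mono (disjI _ ι _ i (neg_reduct_of_not_sat hi)) (Finset.empty_subset _))

theorem reduct_distConv1 (ι : Type) [Nonempty ι] (κ : ι → Type) (g : (i : ι) → κ i → IForm σ) :
    DerivC ∅ (reduct I (impl (conj ι fun i => disj (κ i) (g i))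
      (disj ((i : ι) → κ i) fun c => conj ι fun i => g i (c i)))) := by
  rw [reduct_impl_of_sat (sat_distConv1 I ι κ g)]
  exact distConv1 ι κ fun i k => reduct I (g i k)

theorem reduct_distConv2 (ι : Type) [Nonempty ι] (κ : ι → Type) (g : (i : ι) → κ i → IForm σ) :
    DerivC ∅ (reduct I (impl (conj ((i : ι) → κ i) fun c => disj ι fun i => g i (c i))
      (disj ι fun i => conj (κ i) (g i)))) := by
  rw [reduct_impl_of_sat (sat_distConv2 I ι κ g)]
  exact distConv2 ι κ fun i k => reduct I (g i k)

end DerivC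

end IForm

/-- For any sequent `Γ ⇒ F` and interpretation `I`, if `Γ ⇒ F`
is a theorem of the extended system, then its reduct `Γ^I ⇒ F^I` is a
theorem of the classical extended system. -/
theorem extended_reduct_classical {σ : Type} (Γ : Finset (IForm σ))
    (F : IForm σ) (I : Set σ) (h : IForm.DerivE Γ F) :
    IForm.DerivC (Γ.image (IForm.reduct I)) (IForm.reduct I F) := by
  induction h with
  | ax F => simpa using IForm.DerivC.ax (IForm.reduct I F)
  | conjI _ ι f _ ih => exact IForm.DerivC.conjI _ ι (fun i => IForm.reduct I (f i)) ih
  | conjE _ ι f i _ ih => exact IForm.DerivC.conjE _ ι (fun j => IForm.reduct I (f j)) i ih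
  | disjI _ ι f i _ ih => exact IForm.DerivC.disjI _ ι (fun j => IForm.reduct I (f j)) i ih
  | disjE _ _ ι f _ _ _ ih₁ ih₂ =>
    rw [Finset.image_union]
    exact IForm.DerivC.disjE _ _ ι (fun j => IForm.reduct I (f j)) _ ih₁
      fun i => by simpa only [Finset.image_insert] using ih₂ i
  | implI _ _ _ hd ih => exact IForm.DerivC.reduct_implI hd ih
  | implE _ _ _ _ _ hd ih₁ ih₂ => exact IForm.DerivC.reduct_implE hd ih₁ ih₂
  | weak _ _ _ _ ih => simpa only [Finset.image_union] using IForm.DerivC.weak _ _ _ ih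
  | hosoi => simpa using IForm.DerivC.reduct_hosoi I _ _
  | demConv => simpa using IForm.DerivC.reduct_demConv I _ _
  | distConv1 => simpa using IForm.DerivC.reduct_distConv1 I _ _ _
  | distConv2 => simpa using IForm.DerivC.reduct_distConv2 I _ _ _
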